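/- Every homogeneous ½-derivation of the planar Galilean conformal algebra W of degree (0̄,0̄,γ) with γ ≠ 0 is zero. -/

import Mathlib

/-!
Write `D Lₘ = fₘ Lₘ₊γ`, `D Hₘ = gₘ Hₘ₊γ`, `D Iₘ = uₘ Iₘ₊γ`, `D Jₘ = vₘ Jₘ₊γ`. The ½-derivation
identity on `[Lₘ, Xₙ]` turns into linear relations between these sequences. In the `L`–`L`
relation, `m = 0` shows `f` is constant away from `γ`, and `(m, n) = (2γ, -γ)` reaches `γ`.
In the `L`–`H` relation, `m = n = 0` gives `γ g₀ = 0` and `n = 1`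
makes `g` constant, so `g = 0` and then `f = 0`. With `f = 0` the `L`–`I` and `L`–`J` relations
force `u = v = 0` exactly as they forced `f` to be constant.
-/

/-- Index type for the basis of the planar Galilean conformal algebra. -/
inductive PGIdx : Type
  | L (m : ℤ) | H (m : ℤ) | I (m : ℤ) | J (m : ℤ)

open PGIdx in
/-- `W` together with a basis `b` satisfying these relations is
the planar Galilean conformal algebra. -/
def IsPlanarGCA (W : Type*) [LieRing W] [LieAlgebra ℂ W]
    (b : Module.Basis PGIdx ℂ W) : Prop :=
  ∀ m n : ℤ,
    ⁅b (L m), b (L n)⁆ = ((m - n : ℤ) : ℂ) • b (L (m + n)) ∧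
    ⁅b (L m), b (H n)⁆ = (-(n : ℂ)) • b (H (m + n)) ∧
    ⁅b (L m), b (I n)⁆ = ((m - n : ℤ) : ℂ) • b (I (m + n)) ∧
    ⁅b (L m), b (J n)⁆ = ((m - n : ℤ) : ℂ) • b (J (m + n)) ∧
    ⁅b (H m), b (I n)⁆ = b (J (m + n)) ∧
    ⁅b (H m), b (J n)⁆ = -b (I (m + n)) ∧
    ⁅b (H m), b (H n)⁆ = 0 ∧
    ⁅b (I m), b (I n)⁆ = 0 ∧
    ⁅b (I m), b (J n)⁆ = 0 ∧
    ⁅b (J m), b (J n)⁆ = 0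

/-- `φ` is a ½-derivation. -/
def IsHalfDerivation {W : Type*} [LieRing W] [LieAlgebra ℂ W]
    (φ : W →ₗ[ℂ] W) : Prop :=
  ∀ x y : W, φ ⁅x, y⁆ = (2 : ℂ)⁻¹ • (⁅φ x, y⁆ + ⁅x, φ y⁆)

theorem IsHalfDerivation.coeff_eq {W : Type*} [LieRing W] [LieAlgebra ℂ W] {D : W →ₗ[ℂ] W}
    (hD : IsHalfDerivation D) {γ : ℤ} {e x : ℤ → W} {a : ℤ → ℤ → ℂ} {f c : ℤ → ℂ}
    (hex : ∀ m n, ⁅e m, x n⁆ = a m n • x (m + n))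
    (he : ∀ m, D (e m) = f m • e (m + γ)) (hx : ∀ n, D (x n) = c n • x (n + γ))
    (hx0 : ∀ n, x n ≠ 0) (m n : ℤ) :
    2 * a m n * c (m + n) = a (m + γ) n * f m + a m (n + γ) * c n := by
  have h := hD (e m) (x n)
  rw [hex, map_smul, hx, he, hx, smul_lie, lie_smul, hex, hex, smul_smul, smul_smul,
    smul_smul, show m + γ + n = m + n + γ by ring, show m + (n + γ) = m + n + γ by ring,
    ← add_smul, smul_smul] at h
  have := smul_left_injective ℂ (hx0 (m + n + γ)) h
  linear_combination 2 * this

/-- The relation between the coefficients `f` of `D Lₘ` and `c` of `D Xₙ` imposed by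
`[Lₘ, Xₙ] = (m - n) Xₘ₊ₙ`, for `X ∈ {L, I, J}`. -/
def WittCoeffRel (γ : ℤ) (f c : ℤ → ℂ) : Prop :=
  ∀ m n : ℤ, 2 * ((m - n : ℤ) : ℂ) * c (m + n) =
    ((m + γ - n : ℤ) : ℂ) * f m + ((m - (n + γ) : ℤ) : ℂ) * c n

namespace WittCoeffRel

variable {γ : ℤ} {f c : ℤ → ℂ}

theorem apply_eq_of_ne (h : WittCoeffRel γ f c) {n : ℤ} (hn : n ≠ γ) : c n = f 0 := by
  have h0 := h 0 n
  rw [zero_add] at h0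
  have hne : (γ : ℂ) - n ≠ 0 := sub_ne_zero.mpr (by exact_mod_cast hn.symm)
  refine sub_eq_zero.mp ((mul_eq_zero.mp ?_).resolve_left hne)
  push_cast at h0
  linear_combination h0

theorem apply_eq (h : WittCoeffRel γ f c) (hγ : γ ≠ 0) (hf : f (2 * γ) = f 0) (n : ℤ) :
    c n = f 0 := by
  rcases ne_or_eq n γ with hn | hn
  · exact h.apply_eq_of_ne hn
  rw [hn]
  have hγ' : (γ : ℂ) ≠ 0 := by exact_mod_cast hγ
  have key := h (2 * γ) (-γ)
  rw [show 2 * γ + -γ = γ by ring, hf, h.apply_eq_of_ne (show -γ ≠ γ by omega)] at key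
  push_cast at key
  exact mul_left_cancel₀ hγ' (by linear_combination key / 6)

end WittCoeffRel

theorem eq_zero_of_H_coeff_rel {γ : ℤ} (hγ : γ ≠ 0) {f g : ℤ → ℂ} (hf : ∀ m, f m = f 0)
    (h : ∀ m n : ℤ, 2 * -(n : ℂ) * g (m + n) = -(n : ℂ) * f m + -((n + γ : ℤ) : ℂ) * g n) :
    (∀ m, f m = 0) ∧ ∀ n, g n = 0 := by
  have hg0 : g 0 = 0 := by
    have h00 := h 0 0
    have hγ' : (γ : ℂ) ≠ 0 := by exact_mod_cast hγ
    push_cast at h00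
    exact (mul_eq_zero.mp (by linear_combination h00)).resolve_left hγ'
  have hstep : ∀ m, 2 * g (m + 1) = f 0 + (1 + γ) * g 1 := fun m => by
    have hm1 := h m 1
    rw [hf m] at hm1
    push_cast at hm1
    linear_combination -hm1
  have hg : ∀ n, g n = 0 := fun n => by
    have h1 := hstep (n - 1)
    have h2 := hstep (-1)
    rw [sub_add_cancel] at h1
    rw [neg_add_cancel, hg0] at h2
    linear_combination (h1 - h2) / 2
  refine ⟨fun m => ?_, hg⟩
  have h01 := hstep 0
  rw [hg, hg] at h01
  rw [hf m]
  linear_combination -h01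

open PGIdx in
theorem homogeneous_half_derivation_deg00_ne_zero_is_zero
    (W : Type*) [LieRing W] [LieAlgebra ℂ W]
    (b : Module.Basis PGIdx ℂ W) (hW : IsPlanarGCA W b)
    (γ : ℤ) (hγ : γ ≠ 0)
    (D : W →ₗ[ℂ] W) (hD : IsHalfDerivation D)
    (hL : ∀ m : ℤ, ∃ c : ℂ, D (b (L m)) = c • b (L (m + γ)))
    (hH : ∀ m : ℤ, ∃ c : ℂ, D (b (H m)) = c • b (H (m + γ)))
    (hI : ∀ m : ℤ, ∃ c : ℂ, D (b (I m)) = c • b (I (m + γ)))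
    (hJ : ∀ m : ℤ, ∃ c : ℂ, D (b (J m)) = c • b (J (m + γ))) :
    D = 0 := by
  choose f hf using hL
  choose g hg using hH
  choose u hu using hI
  choose v hv using hJ
  have hLL : WittCoeffRel γ f f :=
    hD.coeff_eq (fun m n => (hW m n).1) hf hf fun _ => b.ne_zero _
  have hLI : WittCoeffRel γ f u :=
    hD.coeff_eq (fun m n => (hW m n).2.2.1) hf hu fun _ => b.ne_zero _
  have hLJ : WittCoeffRel γ f v :=
    hD.coeff_eq (fun m n => (hW m n).2.2.2.1) hf hv fun _ => b.ne_zero _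
  have hf_const : ∀ m, f m = f 0 := hLL.apply_eq hγ (hLL.apply_eq_of_ne (by omega))
  obtain ⟨hf0, hg0⟩ := eq_zero_of_H_coeff_rel hγ hf_const
    (hD.coeff_eq (fun m n => (hW m n).2.1) hf hg fun _ => b.ne_zero _)
  have hu0 (n : ℤ) : u n = 0 := (hLI.apply_eq hγ (hf_const _) n).trans (hf0 0)
  have hv0 (n : ℤ) : v n = 0 := (hLJ.apply_eq hγ (hf_const _) n).trans (hf0 0)
  refine b.ext fun i => ?_
  rcases i with m | m | m | m <;> simp [hf, hg, hu, hv, hf0, hg0, hu0, hv0]
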